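/- Every doubly stochastic n×n matrix is a convex combination of permutation matrices (Birkhoff–von Neumann theorem). -/
import Mathlib

theorem birkhoff_von_neumann
    (n : ℕ) (x : Matrix (Fin n) (Fin n) ℝ)
    (hnonneg : ∀ i j, 0 ≤ x i j)
    (hrow : ∀ i, ∑ j, x i j = 1)
    (hcol : ∀ j, ∑ i, x i j = 1) :
    ∃ (m : ℕ) (lam : Fin m → ℝ) (σ : Fin m → Equiv.Perm (Fin n)),
      (∀ k, 0 ≤ lam k) ∧ (∑ k, lam k = 1) ∧
      ∀ i j, x i j = ∑ k, lam k * (if σ k i = j then (1 : ℝ) else 0) := by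
  have hx : x ∈ doublyStochastic ℝ (Fin n) :=
    mem_doublyStochastic_iff_sum.2 ⟨fun i j => hnonneg i j, hrow, hcol⟩
  obtain ⟨w, hw0, hw1, hwx⟩ := exists_eq_sum_perm_of_mem_doublyStochastic hx
  set e := (Fintype.equivFin (Equiv.Perm (Fin n))).symm
  refine ⟨Fintype.card (Equiv.Perm (Fin n)), fun k => w (e k), fun k => e k,
    fun k => hw0 _, ?_, fun i j => ?_⟩
  · rw [Equiv.sum_comp e w, hw1]
  · have := congrFun (congrFun hwx i) j
    rw [← this]
    rw [← Equiv.sum_comp e (fun σ => w σ • Equiv.Perm.permMatrix ℝ σ)]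
    simp [Matrix.sum_apply, Equiv.Perm.permMatrix, PEquiv.toMatrix_apply,
      Equiv.toPEquiv_apply, eq_comm]
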